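/- arXiv:1903.01832 — 2 statements merged into one kernel-verified Lean document; each statement's English description precedes it below -/
import Mathlib

section
/- Let Π be an equitable partition, with n cells all of the same size |X|/n, of a d-class association scheme on a finite set X with intersection numbers p_{ij}^k, and let M_i denote the quotient matrices. Let m ≥ 2 be a positive integer. If for a fixed i ∈ {1,...,d} the integer m divides p_{ii}^k for every k ∈ {0,1,...,d}, then the ℤ/mℤ-submodule of (ℤ/mℤ)^n spanned by the rows of the image of M_i modulo m is self-orthogonal: the standard inner product of any two elements of this submodule is 0 in ℤ/mℤ; equivalently, M_i · M_iᵀ = 0 over ℤ/mℤ. -/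
/-!
Write `H` for the characteristic matrix of the partition, so that `A i * H = H * M i`. Since the
rows of `H * M` are rows of `M`, a matrix `M` is determined by `H * M`; hence the quotient
matrices obey the same multiplication table as the `A i`, and in particular
`M i * M i = ∑ k, p i i k • M k ≡ 0 (mod m)`. With all cells of size `s` one has
`Hᵀ * A i * H = s • M i`, so the symmetry of `A i` passes to `M i`, and
`M i * (M i)ᵀ = M i * M i`. Finally `N * Nᵀ = 0` makes the row span of `N` self-orthogonal.
-/

open Matrix Finset

namespace Matrix

variable {ι κ R : Type*} [Fintype ι] [Fintype κ]

theorem dotProduct_eq_zero_of_mem_span_rows [CommSemiring R] {N : Matrix ι κ R}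
    (hN : N * Nᵀ = 0) {u v : κ → R} (hu : u ∈ Submodule.span R (Set.range N))
    (hv : v ∈ Submodule.span R (Set.range N)) : u ⬝ᵥ v = 0 := by
  obtain ⟨a, rfl⟩ := (Submodule.mem_span_range_iff_exists_fun R).mp hu
  obtain ⟨b, rfl⟩ := (Submodule.mem_span_range_iff_exists_fun R).mp hv
  rw [← vecMul_eq_sum, ← vecMul_eq_sum, ← mulVec_transpose N b, ← dotProduct_mulVec,
    mulVec_mulVec, hN, zero_mulVec, dotProduct_zero]

omit [Fintype ι] [Fintype κ] in
theorem map_intCast_eq_zero_of_dvd {m : ℕ} {N : Matrix ι κ ℤ} (hN : ∀ a b, (m : ℤ) ∣ N a b) :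
    N.map (Int.cast : ℤ → ZMod m) = 0 := by
  ext a b
  exact (ZMod.intCast_zmod_eq_zero_iff_dvd _ _).mpr (hN a b)

end Matrix

section EquitablePartition

variable {X ι κ R : Type*} [DecidableEq ι]

/-- The characteristic matrix `H` of the partition of `X` into the fibres of `c`. -/
def cellMatrix (R : Type*) [Zero R] [One R] (c : X → ι) : Matrix X ι R :=
  Matrix.of fun x j => if c x = j then 1 else 0

variable [Fintype ι]

theorem cellMatrix_mul_apply [NonAssocSemiring R] (c : X → ι) (M : Matrix ι κ R) (x : X)
    (k : κ) : (cellMatrix R c * M) x k = M (c x) k := by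
  simp [cellMatrix, mul_apply, ite_mul]

theorem cellMatrix_mul_right_injective [NonAssocSemiring R] {c : X → ι}
    (hc : Function.Surjective c) :
    Function.Injective fun M : Matrix ι κ R => cellMatrix R c * M := by
  intro M M' h
  ext j k
  obtain ⟨x, rfl⟩ := hc j
  simpa only [cellMatrix_mul_apply] using congr_fun₂ h x k

variable [Fintype X]

theorem transpose_cellMatrix_mul_cellMatrix_mul [NonAssocSemiring R] {c : X → ι} {s : ℕ}
    (hsize : ∀ j, #{x | c x = j} = s) (M : Matrix ι κ R) :
    (cellMatrix R c)ᵀ * (cellMatrix R c * M) = (s : R) • M := by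
  ext j k
  rw [mul_apply]
  simp only [cellMatrix_mul_apply]
  simp only [transpose_apply, cellMatrix, of_apply, ite_mul, one_mul, zero_mul, sum_ite,
    sum_const_zero, add_zero, Matrix.smul_apply, smul_eq_mul]
  rw [sum_congr rfl fun x hx => by rw [(mem_filter.mp hx).2], sum_const, hsize, nsmul_eq_mul]

theorem mul_cellMatrix_eq_sum_smul [CommSemiring R] [Fintype κ] {c : X → ι}
    {A : κ → Matrix X X R} {M : κ → Matrix ι ι R}
    (hM : ∀ i, A i * cellMatrix R c = cellMatrix R c * M i) (p : κ → R) :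
    (∑ k, p k • A k) * cellMatrix R c = cellMatrix R c * ∑ k, p k • M k := by
  simp only [Matrix.sum_mul, Matrix.mul_sum, Matrix.smul_mul, Matrix.mul_smul, hM]

theorem quotient_mul_eq_sum_smul [CommSemiring R] [Fintype κ] {c : X → ι}
    (hc : Function.Surjective c) {A : κ → Matrix X X R} {M : κ → Matrix ι ι R}
    (hM : ∀ i, A i * cellMatrix R c = cellMatrix R c * M i) {p : κ → κ → κ → R}
    (hmul : ∀ i j, A i * A j = ∑ k, p i j k • A k) (i j : κ) :
    M i * M j = ∑ k, p i j k • M k := by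
  apply cellMatrix_mul_right_injective hc
  calc cellMatrix R c * (M i * M j) = A i * A j * cellMatrix R c := by
        rw [← Matrix.mul_assoc, ← hM i, Matrix.mul_assoc, ← hM j, Matrix.mul_assoc]
    _ = cellMatrix R c * ∑ k, p i j k • M k := by rw [hmul, mul_cellMatrix_eq_sum_smul hM]

theorem Matrix.IsSymm.of_mul_cellMatrix_eq [CommRing R] [NoZeroDivisors R] [CharZero R]
    {c : X → ι} (hc : Function.Surjective c) {s : ℕ} (hsize : ∀ j, #{x | c x = j} = s)
    {A : Matrix X X R} {M : Matrix ι ι R} (hA : A.IsSymm)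
    (hAM : A * cellMatrix R c = cellMatrix R c * M) : M.IsSymm := by
  have hcompress : (cellMatrix R c)ᵀ * A * cellMatrix R c = (s : R) • M := by
    rw [Matrix.mul_assoc, hAM, transpose_cellMatrix_mul_cellMatrix_mul hsize]
  have hsmul : (s : R) • Mᵀ = (s : R) • M := by
    rw [← transpose_smul, ← hcompress, transpose_mul, transpose_mul, transpose_transpose, hA,
      Matrix.mul_assoc]
  ext j k
  have hs : (s : R) ≠ 0 := by
    obtain ⟨x, hx⟩ := hc j
    rw [← hsize j, Nat.cast_ne_zero, ← pos_iff_ne_zero, card_pos]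
    exact ⟨x, by simp [hx]⟩
  exact mul_left_cancel₀ hs (congr_fun₂ hsmul j k)

end EquitablePartition

theorem quotient_matrix_spans_self_orthogonal_code_over_zmod_general
    {X : Type*} [Fintype X] (d n : ℕ)
    (m : ℕ)
    (A : Fin (d + 1) → Matrix X X ℤ)
    (pnum : Fin (d + 1) → Fin (d + 1) → Fin (d + 1) → ℕ)
    (hsymm : ∀ i, (A i)ᵀ = A i)
    (hmul : ∀ i j, A i * A j = ∑ k, (pnum i j k : ℤ) • A k)
    -- the partition into `n` nonempty cells, all of size `|X| / n`
    (c : X → Fin n) (hc : Function.Surjective c)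
    (hsize : ∀ j, (Finset.univ.filter fun x => c x = j).card = Fintype.card X / n)
    -- the partition is equitable, with quotient matrices `M i`
    (M : Fin (d + 1) → Matrix (Fin n) (Fin n) ℤ)
    (hM : ∀ i, A i * (Matrix.of fun x j => if c x = j then (1 : ℤ) else 0)
        = (Matrix.of fun x j => if c x = j then (1 : ℤ) else 0) * M i)
    (i : Fin (d + 1))
    (hdiv : ∀ k, m ∣ pnum i i k) :
    (∀ u ∈ Submodule.span (ZMod m)
        (Set.range fun r => ((M i).map (Int.cast : ℤ → ZMod m)) r),
     ∀ v ∈ Submodule.span (ZMod m)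
        (Set.range fun r => ((M i).map (Int.cast : ℤ → ZMod m)) r),
       u ⬝ᵥ v = 0)
    ∧ ((M i).map (Int.cast : ℤ → ZMod m))
        * ((M i).map (Int.cast : ℤ → ZMod m))ᵀ = 0 := by
  have hMsymm : (M i).IsSymm := IsSymm.of_mul_cellMatrix_eq hc hsize (hsymm i) (hM i)
  have hMsq : M i * M i = ∑ k, (pnum i i k : ℤ) • M k :=
    quotient_mul_eq_sum_smul hc hM hmul i i
  have hdvd : ∀ a b, (m : ℤ) ∣ (M i * (M i)ᵀ) a b := by
    intro a b
    rw [hMsymm.eq, hMsq, Matrix.sum_apply]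
    exact dvd_sum fun k _ => by
      simpa [Matrix.smul_apply] using (Int.natCast_dvd_natCast.mpr (hdiv k)).mul_right _
  have hzero : (M i).map (Int.cast : ℤ → ZMod m) * ((M i).map Int.cast)ᵀ = 0 := by
    rw [← transpose_map]
    exact (Matrix.map_mul (f := Int.castRingHom (ZMod m))).symm.trans
      (map_intCast_eq_zero_of_dvd hdvd)
  exact ⟨fun u hu v hv => dotProduct_eq_zero_of_mem_span_rows hzero hu hv, hzero⟩

/-- If an equitable partition of a `d`-class association scheme has `n`
cells all of the same size `|X| / n`, and `m ≥ 2` divides `p i i k` for all `k`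
(for a fixed `i ∈ {1, …, d}`), then the rows of `M i`, reduced mod `m`, span a
self-orthogonal code of length `n` over `ℤ/mℤ`; equivalently `M i * (M i)ᵀ = 0`
over `ℤ/mℤ`. -/
theorem quotient_matrix_spans_self_orthogonal_code_over_zmod
    {X : Type*} [Fintype X] [DecidableEq X] (d n : ℕ)
    (m : ℕ) (hm : 2 ≤ m)
    (A : Fin (d + 1) → Matrix X X ℤ)
    (pnum : Fin (d + 1) → Fin (d + 1) → Fin (d + 1) → ℕ)
    (hsymm : ∀ i, (A i)ᵀ = A i)
    (h01 : ∀ i u v, A i u v = 0 ∨ A i u v = 1)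
    (hA0 : A 0 = 1)
    (hsum : ∑ i, A i = Matrix.of fun _ _ => (1 : ℤ))
    (hmul : ∀ i j, A i * A j = ∑ k, (pnum i j k : ℤ) • A k)
    -- the partition into `n` nonempty cells, all of size `|X| / n`
    (c : X → Fin n) (hc : Function.Surjective c)
    (hsize : ∀ j, (Finset.univ.filter fun x => c x = j).card = Fintype.card X / n)
    -- the partition is equitable, with quotient matrices `M i`
    (M : Fin (d + 1) → Matrix (Fin n) (Fin n) ℤ)
    (hM : ∀ i, A i * (Matrix.of fun x j => if c x = j then (1 : ℤ) else 0)
        = (Matrix.of fun x j => if c x = j then (1 : ℤ) else 0) * M i)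
    (i : Fin (d + 1)) (hi : i ≠ 0)
    (hdiv : ∀ k, m ∣ pnum i i k) :
    (∀ u ∈ Submodule.span (ZMod m)
        (Set.range fun r => ((M i).map (Int.cast : ℤ → ZMod m)) r),
     ∀ v ∈ Submodule.span (ZMod m)
        (Set.range fun r => ((M i).map (Int.cast : ℤ → ZMod m)) r),
       u ⬝ᵥ v = 0)
    ∧ ((M i).map (Int.cast : ℤ → ZMod m))
        * ((M i).map (Int.cast : ℤ → ZMod m))ᵀ = 0 :=
  quotient_matrix_spans_self_orthogonal_code_over_zmod_general d n m A pnum hsymm hmul c hc hsize M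
    hM i hdiv
end

section
/- Let Π be an equitable partition, with n cells all of the same size |X|/n, of a d-class association scheme on a finite set X with intersection numbers p_{ij}^k, and let M_i denote the quotient matrices. Let p be a prime, q = p^m, and I ⊆ {0,1,...,d}, and suppose p divides p_{xy}^k for all k ∈ {0,1,...,d} and all x, y ∈ I. Then for any two elements B, C of the non-unital F_q-subalgebra of n × n matrices over F_q generated by the images of the matrices M_i, i ∈ I (entries reduced modulo p and embedded in F_q), one has B · Cᵀ = 0; hence the set of row spaces of the elements of this algebra forms a self-orthogonal subspace code in F_q^n. -/
open Matrix Finset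

/-!
Write `H` for the characteristic matrix of the partition. Equal cell sizes `s` give
`Hᵀ H = s • 1`, so `s • M i = Hᵀ A i H`: the quotient matrices are symmetric and satisfy
`M x M y = ∑ k, p x y k • M k`, like the `A i`. Modulo `p` the products of two generators
`M x, M y` with `x, y ∈ I` therefore vanish, so the non-unital algebra they generate has
zero multiplication and consists of symmetric matrices; hence `B Cᵀ = B C = 0`.
-/

theorem Function.Surjective.card_fiber_ne_zero {X ι : Type*} [Fintype X] [DecidableEq ι]
    [Nonempty ι] {c : X → ι} (hc : Function.Surjective c) {s : ℕ}
    (hsize : ∀ j, #{x | c x = j} = s) : s ≠ 0 := by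
  obtain ⟨j⟩ := ‹Nonempty ι›
  obtain ⟨x, rfl⟩ := hc j
  rw [← hsize (c x)]
  exact (Finset.card_pos.mpr ⟨x, by simp⟩).ne'

namespace NonUnitalAlgebra

variable {R A : Type*} [CommSemiring R] [NonUnitalSemiring A] [Module R A]
  [IsScalarTower R A A] [SMulCommClass R A A]

theorem mul_eq_zero_of_mem_adjoin {S : Set A} (hS : ∀ a ∈ S, ∀ b ∈ S, a * b = 0) {a b : A}
    (ha : a ∈ adjoin R S) (hb : b ∈ adjoin R S) : a * b = 0 := by
  induction ha, hb using adjoin_induction₂ with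
  | mem_mem x y hx hy => exact hS x hx y hy
  | zero_left => exact zero_mul _
  | zero_right => exact mul_zero _
  | add_left _ _ _ _ _ _ hxz hyz => rw [add_mul, hxz, hyz, add_zero]
  | add_right _ _ _ _ _ _ hxy hxz => rw [mul_add, hxy, hxz, add_zero]
  | mul_left _ _ _ _ _ _ _ hyz => rw [mul_assoc, hyz, mul_zero]
  | mul_right _ _ _ _ _ _ hxy _ => rw [← mul_assoc, hxy, zero_mul]
  | smul_left _ _ _ _ _ hxy => rw [smul_mul_assoc, hxy, smul_zero]
  | smul_right _ _ _ _ _ hxy => rw [mul_smul_comm, hxy, smul_zero]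

end NonUnitalAlgebra

namespace Matrix

variable {X ι κ R : Type*}

theorem isSymm_of_mem_adjoin [Fintype ι] [CommSemiring R] {S : Set (Matrix ι ι R)}
    (hS : ∀ a ∈ S, ∀ b ∈ S, a * b = 0) (hsymm : ∀ a ∈ S, a.IsSymm) {a : Matrix ι ι R}
    (ha : a ∈ NonUnitalAlgebra.adjoin R S) : a.IsSymm := by
  induction ha using NonUnitalAlgebra.adjoin_induction with
  | mem x hx => exact hsymm x hx
  | add _ _ _ _ hx hy => exact hx.add hy
  | zero => exact isSymm_zero
  | mul _ _ hx hy _ _ =>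
    rw [NonUnitalAlgebra.mul_eq_zero_of_mem_adjoin hS hx hy]
    exact isSymm_zero
  | smul r _ _ hx => exact hx.smul r

theorem dotProduct_eq_zero_of_mul_transpose_eq_zero [Fintype ι] [CommSemiring R]
    {B C : Matrix X ι R} (h : B * Cᵀ = 0) {u v : ι → R}
    (hu : u ∈ Submodule.span R (Set.range fun r => B r))
    (hv : v ∈ Submodule.span R (Set.range fun r => C r)) : u ⬝ᵥ v = 0 := by
  induction hu, hv using Submodule.span_induction₂ with
  | mem_mem x y hx hy =>
    obtain ⟨r, rfl⟩ := hx
    obtain ⟨r', rfl⟩ := hy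
    simpa [mul_apply, dotProduct] using congrFun₂ h r r'
  | zero_left => exact zero_dotProduct _
  | zero_right => exact dotProduct_zero _
  | add_left _ _ _ _ _ _ hxz hyz => rw [add_dotProduct, hxz, hyz, add_zero]
  | add_right _ _ _ _ _ _ hxy hxz => rw [dotProduct_add, hxy, hxz, add_zero]
  | smul_left _ _ _ _ _ hxy => rw [smul_dotProduct, hxy, smul_zero]
  | smul_right _ _ _ _ _ hxy => rw [dotProduct_smul, hxy, smul_zero]

def cellMatrix (R : Type*) [Zero R] [One R] [DecidableEq ι] (c : X → ι) : Matrix X ι R :=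
  of fun x j => if c x = j then 1 else 0

theorem cellMatrix_transpose_mul_self [Fintype X] [DecidableEq ι] [NonAssocSemiring R]
    {c : X → ι} {s : ℕ} (hsize : ∀ j, #{x | c x = j} = s) :
    (cellMatrix R c)ᵀ * cellMatrix R c = (s : R) • 1 := by
  ext j j'
  by_cases h : j = j'
  · subst h
    simp [cellMatrix, mul_apply, ← ite_and, Finset.sum_boole, hsize]
  · rw [smul_apply, one_apply_ne h, smul_zero, mul_apply]
    refine Finset.sum_eq_zero fun x _ => ?_
    simp only [cellMatrix, transpose_apply, of_apply, ← ite_and, mul_boole]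
    exact if_neg fun hx => h (hx.2.symm.trans hx.1)

section Quotient

variable [Fintype X] [Fintype ι] [DecidableEq ι] [CommRing R] {H : Matrix X ι R} {s : R}

theorem transpose_mul_mul_eq_smul_of_mul_eq_mul (hH : Hᵀ * H = s • 1) {A : Matrix X X R}
    {M : Matrix ι ι R} (hAM : A * H = H * M) : Hᵀ * A * H = s • M := by
  rw [Matrix.mul_assoc, hAM, ← Matrix.mul_assoc, hH, smul_mul, Matrix.one_mul]

variable [NoZeroDivisors R]

theorem isSymm_of_mul_eq_mul (hH : Hᵀ * H = s • 1) (hs : s ≠ 0) {A : Matrix X X R}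
    {M : Matrix ι ι R} (hA : A.IsSymm) (hAM : A * H = H * M) : M.IsSymm := by
  refine smul_right_injective _ hs ?_
  change s • Mᵀ = s • M
  rw [← transpose_smul, ← transpose_mul_mul_eq_smul_of_mul_eq_mul hH hAM, transpose_mul,
    transpose_mul, transpose_transpose, hA.eq, Matrix.mul_assoc]

theorem mul_eq_sum_smul_of_mul_eq_mul [Fintype κ] (hH : Hᵀ * H = s • 1) (hs : s ≠ 0)
    {A : κ → Matrix X X R} {M : κ → Matrix ι ι R} (hAM : ∀ k, A k * H = H * M k)
    {x y : κ} {a : κ → R} (hmul : A x * A y = ∑ k, a k • A k) :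
    M x * M y = ∑ k, a k • M k := by
  refine smul_right_injective _ hs ?_
  calc s • (M x * M y) = Hᵀ * A x * H * M y := by
        rw [transpose_mul_mul_eq_smul_of_mul_eq_mul hH (hAM x), smul_mul]
    _ = Hᵀ * (A x * A y) * H := by simp only [Matrix.mul_assoc, hAM y]
    _ = s • ∑ k, a k • M k := by
        simp only [hmul, Matrix.mul_sum, Matrix.sum_mul, Matrix.mul_smul, Matrix.smul_mul,
          transpose_mul_mul_eq_smul_of_mul_eq_mul hH (hAM _),
          Finset.smul_sum, smul_comm s]

end Quotient

theorem map_intCast_mul_eq_zero [Fintype ι] [Fintype κ] {F : Type*} [Ring F] (p : ℕ)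
    [CharP F p] {M N : Matrix ι ι ℤ} {L : κ → Matrix ι ι ℤ} {a : κ → ℤ}
    (h : M * N = ∑ k, a k • L k) (hdiv : ∀ k, (p : ℤ) ∣ a k) :
    M.map (Int.cast : ℤ → F) * N.map Int.cast = 0 := by
  have hmap := Matrix.map_mul (L := M) (M := N) (f := Int.castRingHom F)
  rw [Int.coe_castRingHom] at hmap
  rw [← hmap, h]
  ext i j
  simp [Matrix.sum_apply, (CharP.intCast_eq_zero_iff F p _).mpr (hdiv _)]

end Matrix

theorem quotient_algebra_row_spaces_self_orthogonal_subspace_code_general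
    {X : Type*} [Fintype X] (d n : ℕ)
    (p m : ℕ) [Fact p.Prime]
    (A : Fin (d + 1) → Matrix X X ℤ)
    (pnum : Fin (d + 1) → Fin (d + 1) → Fin (d + 1) → ℕ)
    (hsymm : ∀ i, (A i)ᵀ = A i)
    (hmul : ∀ i j, A i * A j = ∑ k, (pnum i j k : ℤ) • A k)
    -- the partition into `n` nonempty cells, all of size `|X| / n`
    (c : X → Fin n) (hc : Function.Surjective c)
    (hsize : ∀ j, (Finset.univ.filter fun x => c x = j).card = Fintype.card X / n)
    -- the partition is equitable, with quotient matrices `M i`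
    (M : Fin (d + 1) → Matrix (Fin n) (Fin n) ℤ)
    (hM : ∀ i, A i * (Matrix.of fun x j => if c x = j then (1 : ℤ) else 0)
        = (Matrix.of fun x j => if c x = j then (1 : ℤ) else 0) * M i)
    (I : Set (Fin (d + 1)))
    (hdiv : ∀ x ∈ I, ∀ y ∈ I, ∀ k, p ∣ pnum x y k) :
    ∀ B ∈ NonUnitalAlgebra.adjoin (GaloisField p m)
        ((fun i => (M i).map (Int.cast : ℤ → GaloisField p m)) '' I),
    ∀ C ∈ NonUnitalAlgebra.adjoin (GaloisField p m)
        ((fun i => (M i).map (Int.cast : ℤ → GaloisField p m)) '' I),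
      B * Cᵀ = 0 ∧
      ∀ u ∈ Submodule.span (GaloisField p m) (Set.range fun r => B r),
      ∀ v ∈ Submodule.span (GaloisField p m) (Set.range fun r => C r),
        u ⬝ᵥ v = 0 := by
  set S := (fun i => (M i).map (Int.cast : ℤ → GaloisField p m)) '' I
  intro B hB C hC
  suffices hBC : B * Cᵀ = 0 from
    ⟨hBC, fun u hu v hv => dotProduct_eq_zero_of_mul_transpose_eq_zero hBC hu hv⟩
  obtain hn | hn := isEmpty_or_nonempty (Fin n)
  · exact Subsingleton.elim _ _
  have hH := cellMatrix_transpose_mul_self (R := ℤ) hsize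
  have hs : ((Fintype.card X / n : ℕ) : ℤ) ≠ 0 :=
    Nat.cast_ne_zero.mpr (hc.card_fiber_ne_zero hsize)
  have hS_mul : ∀ a ∈ S, ∀ b ∈ S, a * b = 0 := by
    rintro _ ⟨x, hx, rfl⟩ _ ⟨y, hy, rfl⟩
    exact map_intCast_mul_eq_zero p (mul_eq_sum_smul_of_mul_eq_mul hH hs hM (hmul x y))
      fun k => Int.natCast_dvd_natCast.mpr (hdiv x hx y hy k)
  have hS_symm : ∀ a ∈ S, a.IsSymm := by
    rintro _ ⟨i, -, rfl⟩
    exact (isSymm_of_mul_eq_mul hH hs (hsymm i) (hM i)).map _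
  rw [(isSymm_of_mem_adjoin hS_mul hS_symm hC).eq]
  exact NonUnitalAlgebra.mul_eq_zero_of_mem_adjoin hS_mul hB hC

/-- Let `Π` be an equitable partition, into `n` cells all of the same size
`|X| / n`, of a `d`-class association scheme, with quotient matrices `M i`.  Let `p` be a
prime, `q = p ^ m`, and `I ⊆ {0, …, d}` with `p ∣ p x y k` for all `k` and all
`x, y ∈ I`.  Then any two elements `B, C` of the non-unital `F_q`-subalgebra generated
by the images of the `M i`, `i ∈ I`, satisfy `B * Cᵀ = 0`; hence the row spaces of the
elements of this algebra form a self-orthogonal subspace code in `F_q^n`. -/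
theorem quotient_algebra_row_spaces_self_orthogonal_subspace_code
    {X : Type*} [Fintype X] [DecidableEq X] (d n : ℕ)
    (p m : ℕ) [Fact p.Prime] (hm : 0 < m)
    (A : Fin (d + 1) → Matrix X X ℤ)
    (pnum : Fin (d + 1) → Fin (d + 1) → Fin (d + 1) → ℕ)
    (hsymm : ∀ i, (A i)ᵀ = A i)
    (h01 : ∀ i u v, A i u v = 0 ∨ A i u v = 1)
    (hA0 : A 0 = 1)
    (hsum : ∑ i, A i = Matrix.of fun _ _ => (1 : ℤ))
    (hmul : ∀ i j, A i * A j = ∑ k, (pnum i j k : ℤ) • A k)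
    -- the partition into `n` nonempty cells, all of size `|X| / n`
    (c : X → Fin n) (hc : Function.Surjective c)
    (hsize : ∀ j, (Finset.univ.filter fun x => c x = j).card = Fintype.card X / n)
    -- the partition is equitable, with quotient matrices `M i`
    (M : Fin (d + 1) → Matrix (Fin n) (Fin n) ℤ)
    (hM : ∀ i, A i * (Matrix.of fun x j => if c x = j then (1 : ℤ) else 0)
        = (Matrix.of fun x j => if c x = j then (1 : ℤ) else 0) * M i)
    (I : Set (Fin (d + 1)))
    (hdiv : ∀ x ∈ I, ∀ y ∈ I, ∀ k, p ∣ pnum x y k) :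
    ∀ B ∈ NonUnitalAlgebra.adjoin (GaloisField p m)
        ((fun i => (M i).map (Int.cast : ℤ → GaloisField p m)) '' I),
    ∀ C ∈ NonUnitalAlgebra.adjoin (GaloisField p m)
        ((fun i => (M i).map (Int.cast : ℤ → GaloisField p m)) '' I),
      B * Cᵀ = 0 ∧
      ∀ u ∈ Submodule.span (GaloisField p m) (Set.range fun r => B r),
      ∀ v ∈ Submodule.span (GaloisField p m) (Set.range fun r => C r),
        u ⬝ᵥ v = 0 :=
  quotient_algebra_row_spaces_self_orthogonal_subspace_code_general d n p m A pnum hsymm hmul c hc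
    hsize M hM I hdiv
end
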